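/- arXiv:0908.4372 — 2 statements merged into one kernel-verified Lean document; each statement's English description precedes it below -/
import Mathlib

section
/- Suppose C_1, ..., C_5 are pairwise orthogonal vectors of square -2 in a lattice L, orthogonal to a vector K, and every x ∈ L with x·K = 0 has x·x even. Then there do not exist two distinct nonempty subsets S, T of {1,...,5} such that Σ_{i∈S} C_i ∈ 2L and Σ_{i∈T} C_i ∈ 2L and S ≠ T with S, T, and S Δ T all nonempty. -/
/-- For five pairwise orthogonal square-`(-2)` vectors orthogonal to `K` in a
lattice where every vector of `K^⊥` has even square, there do not exist two
distinct nonempty subsets `S, T` with nonempty symmetric difference whose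
subset sums both lie in `2L`. -/
theorem stmt_6 {L : Type*} [AddCommGroup L] [Module ℤ L]
    (φ : LinearMap.BilinForm ℤ L) (hsym : ∀ x y, φ x y = φ y x)
    (C : Fin 5 → L) (K : L)
    (hsq : ∀ i, φ (C i) (C i) = -2)
    (horth : ∀ i j, i ≠ j → φ (C i) (C j) = 0)
    (hCK : ∀ i, φ (C i) K = 0)
    (heven : ∀ x : L, φ x K = 0 → Even (φ x x)) :
    ¬ ∃ S T : Finset (Fin 5), S.Nonempty ∧ T.Nonempty ∧ S ≠ T ∧
      (symmDiff S T).Nonempty ∧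
      (∃ D : L, ∑ i ∈ S, C i = 2 • D) ∧ (∃ D : L, ∑ i ∈ T, C i = 2 • D) := by
  have key : ∀ S : Finset (Fin 5), (∃ D : L, ∑ i ∈ S, C i = 2 • D) → 4 ∣ S.card := by
    rintro S ⟨D, hD⟩
    have hDK : φ D K = 0 := by
      have h0 : φ (∑ i ∈ S, C i) K = 0 := by
        simp only [map_sum, LinearMap.sum_apply]
        exact Finset.sum_eq_zero fun i _ => hCK i
      rw [hD, two_smul, map_add, LinearMap.add_apply] at h0
      omega
    have hsum : φ (∑ i ∈ S, C i) (∑ j ∈ S, C j) = -2 * S.card := by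
      have hrow : ∀ i ∈ S, φ (C i) (∑ j ∈ S, C j) = -2 := by
        intro i hi
        rw [map_sum, Finset.sum_eq_single i
          (fun j hj hne => horth i j hne.symm) (fun h => absurd hi h)]
        exact hsq i
      calc φ (∑ i ∈ S, C i) (∑ j ∈ S, C j)
          = ∑ i ∈ S, φ (C i) (∑ j ∈ S, C j) :=
            LinearMap.BilinForm.sum_left _ _ _ _
        _ = ∑ i ∈ S, (-2 : ℤ) := Finset.sum_congr rfl hrow
        _ = -2 * S.card := by
            rw [Finset.sum_const, nsmul_eq_mul]; ring
    obtain ⟨m, hm⟩ := heven D hDK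
    rw [hD] at hsum
    have hc : (-2 : ℤ) * S.card = 4 * (m + m) := by
      rw [← hsum, two_smul]
      simp only [map_add, LinearMap.add_apply, hm]
      ring
    have : (4 : ℤ) ∣ (S.card : ℤ) := ⟨-m, by linarith⟩
    exact_mod_cast this
  rintro ⟨S, T, hS, hT, hST, hΔ, hS2, hT2⟩
  have hcS := key S hS2
  have hcT := key T hT2
  have hS5 : S.card ≤ 5 := by simpa using Finset.card_le_univ S
  have hT5 : T.card ≤ 5 := by simpa using Finset.card_le_univ T
  have hSpos : 0 < S.card := Finset.card_pos.mpr hS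
  have hTpos : 0 < T.card := Finset.card_pos.mpr hT
  have hS4 : S.card = 4 := by omega
  have hT4 : T.card = 4 := by omega
  -- symmetric difference sum is in 2L
  have hsymm : ∃ D : L, ∑ i ∈ symmDiff S T, C i = 2 • D := by
    obtain ⟨D1, h1⟩ := hS2
    obtain ⟨D2, h2⟩ := hT2
    refine ⟨D1 + D2 - ∑ i ∈ S ∩ T, C i, ?_⟩
    have e1 : symmDiff S T = (S ∪ T) \ (S ∩ T) := by
      rw [symmDiff_eq_sup_sdiff_inf]; rfl
    have e2 : ∑ i ∈ (S ∪ T) \ (S ∩ T), C i + ∑ i ∈ S ∩ T, C i = ∑ i ∈ S ∪ T, C i :=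
      Finset.sum_sdiff Finset.inter_subset_union
    have e3 : ∑ i ∈ S ∪ T, C i + ∑ i ∈ S ∩ T, C i = ∑ i ∈ S, C i + ∑ i ∈ T, C i :=
      Finset.sum_union_inter
    rw [e1]
    have : ∑ i ∈ (S ∪ T) \ (S ∩ T), C i
        = ∑ i ∈ S, C i + ∑ i ∈ T, C i - ∑ i ∈ S ∩ T, C i - ∑ i ∈ S ∩ T, C i := by
      rw [← e3, ← e2]; abel
    rw [this, h1, h2, two_smul, two_smul]
    abel
  have hcΔ := key _ hsymm
  have hΔpos : 0 < (symmDiff S T).card := Finset.card_pos.mpr hΔ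
  have hcard : (symmDiff S T).card + (S ∩ T).card = (S ∪ T).card := by
    rw [symmDiff_eq_sup_sdiff_inf, Finset.sup_eq_union, Finset.inf_eq_inter]
    exact Finset.card_sdiff_add_card_eq_card Finset.inter_subset_union
  have hui : (S ∪ T).card + (S ∩ T).card = S.card + T.card :=
    Finset.card_union_add_card_inter S T
  have hu5 : (S ∪ T).card ≤ 5 := by simpa using Finset.card_le_univ (S ∪ T)
  omega
end

section
/- There is no nonempty subset S of a 3-element set {C_1, C_2, C_3} of pairwise orthogonal square-(-2) vectors in a lattice L, with each C_i orthogonal to K and every vector in K^⊥ having even square, such that Σ_{i∈S} C_i ∈ 2L. -/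
/-- For three pairwise orthogonal square-`(-2)` vectors orthogonal to `K` in a
lattice where every vector of `K^⊥` has even square, no nonempty subset sum
lies in `2L`. -/
theorem stmt_7 {L : Type*} [AddCommGroup L] [Module ℤ L]
    (φ : LinearMap.BilinForm ℤ L) (hsym : ∀ x y, φ x y = φ y x)
    (C : Fin 3 → L) (K : L)
    (hsq : ∀ i, φ (C i) (C i) = -2)
    (horth : ∀ i j, i ≠ j → φ (C i) (C j) = 0)
    (hCK : ∀ i, φ (C i) K = 0)
    (heven : ∀ x : L, φ x K = 0 → Even (φ x x)) :
    ¬ ∃ S : Finset (Fin 3), S.Nonempty ∧ ∃ D : L, ∑ i ∈ S, C i = 2 • D := by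
  rintro ⟨S, hS, D, hD⟩
  have h1 : φ (∑ i ∈ S, C i) (∑ j ∈ S, C j) = -2 * S.card := by
    simp only [map_sum, LinearMap.sum_apply]
    rw [Finset.sum_congr rfl (fun i hi => Finset.sum_eq_single i
      (fun j hj hne => horth j i hne) (fun h => absurd hi h))]
    simp [hsq, mul_comm]
  have hK : φ (∑ i ∈ S, C i) K = 0 := by
    simp only [map_sum, LinearMap.sum_apply]
    simp [hCK]
  have hDK : φ D K = 0 := by
    rw [hD] at hK
    rw [two_smul, map_add, LinearMap.add_apply] at hK
    omega
  obtain ⟨m, hm⟩ := heven D hDK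
  have h2 : φ (∑ i ∈ S, C i) (∑ j ∈ S, C j) = 4 * (m + m) := by
    rw [hD, two_smul]
    simp only [map_add, LinearMap.add_apply, hm]
    ring
  have hcard : (S.card : ℤ) ≤ 3 := by
    exact_mod_cast le_trans (Finset.card_le_card (Finset.subset_univ S)) (by simp)
  have hpos : 1 ≤ (S.card : ℤ) := by
    exact_mod_cast Finset.card_pos.mpr hS
  omega
end
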